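/- Let Δ ≥ 2 and let G be a connected infinite Δ-regular graph containing a subgraph isomorphic to RT_Δ. Then for every finite subset C of V(G), the graph G − C also contains a subgraph isomorphic to RT_Δ. -/

import Mathlib

namespace Contagion

open scoped BigOperators

/-- The three strategies in the contagion game. -/
inductive Strat
  | A | B | AB
deriving DecidableEq

/-- Pairwise payoff to a player using the first strategy against a neighbor
using the second strategy, in the contagion game with parameters `q, r`. -/
noncomputable def pairPayoff (q r : ℝ) : Strat → Strat → ℝ
  | .A, .A => 1 - q
  | .A, .B => 0
  | .A, .AB => 1 - q
  | .B, .A => 0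
  | .B, .B => q
  | .B, .AB => q
  | .AB, .A => 1 - q - r
  | .AB, .B => q - r
  | .AB, .AB => max q (1 - q) - r

variable {V : Type*}

/-- Total payoff to vertex `v` for playing strategy `s` against profile `σ`. -/
noncomputable def totalPayoff (G : SimpleGraph V) (q r : ℝ) (σ : V → Strat)
    (v : V) (s : Strat) : ℝ :=
  ∑ᶠ u ∈ G.neighborSet v, pairPayoff q r s (σ u)

/-- `s` is a best response of vertex `v` to the profile `σ`. -/
def IsBestResponse (G : SimpleGraph V) (q r : ℝ) (σ : V → Strat) (v : V) (s : Strat) : Prop :=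
  ∀ s' : Strat, totalPayoff G q r σ v s' ≤ totalPayoff G q r σ v s

/-- Strategy `A` becomes epidemic in the contagion game `(G, q, r)`:
there are a finite initial set `S₀` (playing `A`, everybody else playing `B`) and a
sequence `α` of vertices in which every vertex appears at least once, such that updating
at step `n` the vertex `α n` to a best response makes every vertex eventually adopt `A`. -/
def Epidemic (G : SimpleGraph V) (q r : ℝ) : Prop :=
  ∃ (S₀ : Set V) (α : ℕ → V) (σ : ℕ → V → Strat),
    S₀.Finite ∧
    Function.Surjective α ∧
    (∀ v ∈ S₀, σ 0 v = Strat.A) ∧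
    (∀ v ∉ S₀, σ 0 v = Strat.B) ∧
    (∀ n, IsBestResponse G q r (σ n) (α n) (σ (n + 1) (α n))) ∧
    (∀ n v, v ≠ α n → σ (n + 1) v = σ n v) ∧
    (∀ v, ∃ n, σ n v = Strat.A)

/-- The epidemic region `Ω_G ⊆ ℝ²` of `G`. -/
def epidemicRegion (G : SimpleGraph V) : Set (ℝ × ℝ) :=
  {p | 0 < p.1 ∧ p.1 < 1 ∧ 0 < p.2 ∧ Epidemic G p.1 p.2}

/-- `G` is `Δ`-regular: every vertex has exactly `Δ` neighbors. -/
def IsRegular (G : SimpleGraph V) (Δ : ℕ) : Prop :=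
  ∀ v, (G.neighborSet v).ncard = Δ

/-- The number of neighbors of `v` lying in the set `S`. -/
noncomputable def degIn (G : SimpleGraph V) (v : V) (S : Set V) : ℕ :=
  (G.neighborSet v ∩ S).ncard

/-- `RT Δ`: the infinite rooted tree in which the root (the empty list) has `Δ - 1`
children and every other vertex also has `Δ - 1` children (hence degree `Δ`). -/
def RT (Δ : ℕ) : SimpleGraph (List (Fin (Δ - 1))) :=
  SimpleGraph.fromRel (fun l l' => ∃ a : Fin (Δ - 1), l' = a :: l)

/-- `G` contains a subgraph isomorphic to `RT Δ`. -/
def HasRTCopy (Δ : ℕ) (G : SimpleGraph V) : Prop :=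
  ∃ f : List (Fin (Δ - 1)) → V,
    Function.Injective f ∧ ∀ x y, (RT Δ).Adj x y → G.Adj (f x) (f y)

/-- The thick half line `HL_Δ` (for even `Δ`), columns indexed by `ℕ` starting with the
first column `0`; `(k, i)` and `(l, j)` are adjacent exactly when `|k - l| = 1`. -/
def HL (Δ : ℕ) : SimpleGraph (ℕ × Fin (Δ / 2)) :=
  SimpleGraph.fromRel (fun x y => y.1 = x.1 + 1)

/-- The epidemic region of the infinite `Δ`-regular tree:
`{(q,r) : q,r > 0, r ≥ ((Δ-1)/Δ)q, q ≤ 1/Δ} ∪ {(q,r) : q,r > 0, 2q + Δr ≤ 1}`. -/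
def treeRegion (Δ : ℕ) : Set (ℝ × ℝ) :=
  {p | 0 < p.1 ∧ 0 < p.2 ∧ ((Δ : ℝ) - 1) / Δ * p.1 ≤ p.2 ∧ p.1 ≤ 1 / Δ} ∪
  {p | 0 < p.1 ∧ 0 < p.2 ∧ 2 * p.1 + Δ * p.2 ≤ 1}

/-- The epidemic region of the thick line `L_Δ`:
`{(q,r) : 0 < q ≤ 1/2, r ≥ q/2} ∪ {(q,r) : q,r > 0, r ≤ q/2, 2q + 2r ≤ 1}`. -/
def thickLineRegion : Set (ℝ × ℝ) :=
  {p | 0 < p.1 ∧ p.1 ≤ 1 / 2 ∧ p.1 / 2 ≤ p.2} ∪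
  {p | 0 < p.1 ∧ 0 < p.2 ∧ p.2 ≤ p.1 / 2 ∧ 2 * p.1 + 2 * p.2 ≤ 1}

/-- `(SAB, SB)` is a blocking structure for the contagion game `(G, q, r)`
on a `Δ`-regular graph `G`. -/
def IsBlockingStructure (G : SimpleGraph V) (Δ : ℕ) (q r : ℝ) (SAB SB : Set V) : Prop :=
  Disjoint SAB SB ∧ (SAB.Nonempty ∨ SB.Nonempty) ∧
  (∀ v ∈ SAB, r / q * Δ < (degIn G v SB : ℝ)) ∧
  ∀ v ∈ SB,
    (1 - q - r) * Δ < (1 - q) * (degIn G v SB : ℝ) + min q (1 - q) * (degIn G v SAB : ℝ) ∧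
    (1 - q) * Δ < (degIn G v SB : ℝ) + q * (degIn G v SAB : ℝ)

/-- The two strategies of the `A`-`B` coordination game. -/
inductive CStrat
  | A | B
deriving DecidableEq

/-- Pairwise payoff in the `A`-`B` coordination game `(G, q)`. -/
noncomputable def cPairPayoff (q : ℝ) : CStrat → CStrat → ℝ
  | .A, .A => 1 - q
  | .A, .B => 0
  | .B, .A => 0
  | .B, .B => q

/-- Total payoff to `v` for playing `s` against profile `σ` in the coordination game. -/
noncomputable def cTotalPayoff (G : SimpleGraph V) (q : ℝ) (σ : V → CStrat)
    (v : V) (s : CStrat) : ℝ :=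
  ∑ᶠ u ∈ G.neighborSet v, cPairPayoff q s (σ u)

/-- `s` is a best response of `v` to `σ` in the coordination game. -/
def CIsBestResponse (G : SimpleGraph V) (q : ℝ) (σ : V → CStrat) (v : V) (s : CStrat) : Prop :=
  ∀ s' : CStrat, cTotalPayoff G q σ v s' ≤ cTotalPayoff G q σ v s

/-- Strategy `A` becomes epidemic in the coordination game `(G, q)` starting from the
initial set `S₀`. -/
def CoordEpidemicFrom (G : SimpleGraph V) (q : ℝ) (S₀ : Set V) : Prop :=
  ∃ (α : ℕ → V) (σ : ℕ → V → CStrat),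
    Function.Surjective α ∧
    (∀ v ∈ S₀, σ 0 v = CStrat.A) ∧
    (∀ v ∉ S₀, σ 0 v = CStrat.B) ∧
    (∀ n, CIsBestResponse G q (σ n) (α n) (σ (n + 1) (α n))) ∧
    (∀ n v, v ≠ α n → σ (n + 1) v = σ n v) ∧
    (∀ v, ∃ n, σ n v = CStrat.A)

/-- Strategy `A` becomes epidemic in the coordination game `(G, q)`. -/
def CoordEpidemic (G : SimpleGraph V) (q : ℝ) : Prop :=
  ∃ S₀ : Set V, S₀.Finite ∧ CoordEpidemicFrom G q S₀

/-! A vertex of `RT Δ` is the list of labels on the path from it up to the root, so appending a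
fixed list `v` on the right maps `RT Δ` onto the subtree hanging below the vertex `v`. A copy of
`RT Δ` meets the finite set `C` only in finitely many vertices, all above some depth `N`; the
subtree below a vertex of depth `N` is then a copy of `RT Δ` avoiding `C`. -/

theorem RT_adj_append_right_iff {Δ : ℕ} {x y : List (Fin (Δ - 1))} (v : List (Fin (Δ - 1))) :
    (RT Δ).Adj (x ++ v) (y ++ v) ↔ (RT Δ).Adj x y := by
  simp only [RT, SimpleGraph.fromRel_adj, ne_eq, ← List.cons_append, List.append_cancel_right_eq]

theorem List.exists_forall_append_notMem_of_finite {α : Type*} [Nonempty α] {S : Set (List α)}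
    (hS : S.Finite) : ∃ v : List α, ∀ l, l ++ v ∉ S := by
  obtain ⟨N, hN⟩ := (hS.image List.length).bddAbove
  refine ⟨List.replicate (N + 1) (Classical.arbitrary α), fun l hl => ?_⟩
  have := hN ⟨_, hl, rfl⟩
  simp only [List.length_append, List.length_replicate] at this
  omega

theorem HasRTCopy.induce_compl_of_finite {Δ : ℕ} (hΔ : 2 ≤ Δ) {G : SimpleGraph V}
    (hcopy : HasRTCopy Δ G) {C : Set V} (hC : C.Finite) : HasRTCopy Δ (G.induce Cᶜ) := by
  obtain ⟨f, hf, hadj⟩ := hcopy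
  have : Nonempty (Fin (Δ - 1)) := ⟨⟨0, by omega⟩⟩
  obtain ⟨v, hv⟩ := List.exists_forall_append_notMem_of_finite (hC.preimage hf.injOn)
  refine ⟨fun l => ⟨f (l ++ v), hv l⟩, fun x y hxy => ?_, fun x y hxy => ?_⟩
  · exact List.append_cancel_right (hf (congrArg Subtype.val hxy))
  · exact hadj _ _ ((RT_adj_append_right_iff v).2 hxy)

theorem hasRTCopy_minus_finite_general {V : Type*} (Δ : ℕ) (hΔ : 2 ≤ Δ)
    (G : SimpleGraph V)
    (hcopy : HasRTCopy Δ G) :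
    ∀ C : Set V, C.Finite →
      ∃ f : List (Fin (Δ - 1)) → ↥(Cᶜ),
        Function.Injective f ∧
        ∀ x y, (RT Δ).Adj x y → (SimpleGraph.induce (Cᶜ : Set V) G).Adj (f x) (f y) :=
  fun _ hC => hcopy.induce_compl_of_finite hΔ hC

/-- If a connected infinite `Δ`-regular graph `G` contains a subgraph
isomorphic to `RT_Δ`, then for every finite `C ⊆ V(G)` the graph `G - C` still contains
a subgraph isomorphic to `RT_Δ`. -/
theorem hasRTCopy_minus_finite {V : Type*} (Δ : ℕ) (hΔ : 2 ≤ Δ)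
    (G : SimpleGraph V) (hInf : Infinite V) (hConn : G.Connected) (hReg : IsRegular G Δ)
    (hcopy : HasRTCopy Δ G) :
    ∀ C : Set V, C.Finite →
      ∃ f : List (Fin (Δ - 1)) → ↥(Cᶜ),
        Function.Injective f ∧
        ∀ x y, (RT Δ).Adj x y → (SimpleGraph.induce (Cᶜ : Set V) G).Adj (f x) (f y) :=
  hasRTCopy_minus_finite_general Δ hΔ G hcopy

end Contagion
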